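/- arXiv:2104.09377 — 2 statements merged into one kernel-verified Lean document; each statement's English description precedes it below -/
import Mathlib

section
/- Let d be a positive integer, let n_1, …, n_d be positive integers, let c, K be real numbers, and let μ_1, …, μ_d, P_1, …, P_d : I → ℝ be differentiable functions on a nonempty open interval I ⊆ ℝ satisfying μ_α' = μ_α · P_α and P_α' = P_α² + c on I for each α, and Σ_{α=1}^d n_α μ_α = K at every point of I. Then for every positive integer q and every point of I: if q is odd, Σ_{α=1}^d n_α μ_α P_α^q = 0; and if q is even, Σ_{α=1}^d n_α μ_α P_α^q = ((q−1)!!/q!!)·(−c)^{q/2}·K. -/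
/-!
Write `S q = ∑ α, n α * μ α * P α ^ q`. The two differential equations give
`S q' = (q + 1) S (q + 1) + q c S (q - 1)`. Since `S 0 = K` is constant, `S 1 = S 0' = 0`, and once
`S (q + 1)` is known to be constant, differentiating it gives `(q + 2) S (q + 2) = -(q + 1) c S q`.
Thus `S q` follows the recursion of `momentSeq c K`, which is solved in closed form.
-/

open scoped Nat

noncomputable def momentSeq (c K : ℝ) : ℕ → ℝ
  | 0 => K
  | 1 => 0
  | q + 2 => -((q + 1) * c / (q + 2)) * momentSeq c K q

theorem momentSeq_odd (c K : ℝ) (m : ℕ) : momentSeq c K (2 * m + 1) = 0 := by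
  induction m with
  | zero => rfl
  | succ k ih => rw [show 2 * (k + 1) + 1 = 2 * k + 1 + 2 by ring, momentSeq, ih, mul_zero]

theorem momentSeq_even (c K : ℝ) (m : ℕ) :
    momentSeq c K (2 * m) = ((2 * m - 1)‼ / (2 * m)‼ : ℝ) * (-c) ^ m * K := by
  induction m with
  | zero => simp [momentSeq]
  | succ k ih =>
    rw [show 2 * (k + 1) = 2 * k + 2 by ring, momentSeq, ih, Nat.doubleFactorial_add_two,
      show 2 * k + 2 - 1 = 2 * k + 1 by omega, Nat.doubleFactorial_add_one]
    have : ((2 * k)‼ : ℝ) ≠ 0 := by exact_mod_cast (Nat.doubleFactorial_pos _).ne'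
    push_cast
    field_simp
    ring

section WeightedPowerSum

variable {ι : Type*} [Fintype ι] (w : ι → ℝ) (μ P : ι → ℝ → ℝ)

def weightedPowerSum (q : ℕ) (x : ℝ) : ℝ := ∑ i, w i * μ i x * P i x ^ q

variable {w μ P} {c x : ℝ}

theorem hasDerivAt_weightedPowerSum (hμ : ∀ i, HasDerivAt (μ i) (μ i x * P i x) x)
    (hP : ∀ i, HasDerivAt (P i) (P i x ^ 2 + c) x) (q : ℕ) :
    HasDerivAt (weightedPowerSum w μ P q)
      ((q + 1) * weightedPowerSum w μ P (q + 1) x + q * c * weightedPowerSum w μ P (q - 1) x) x := by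
  have hterm (i : ι) : HasDerivAt (fun y ↦ w i * μ i y * P i y ^ q)
      (w i * (μ i x * P i x) * P i x ^ q + w i * μ i x * (q * P i x ^ (q - 1) * (P i x ^ 2 + c))) x :=
    ((hμ i).const_mul (w i)).fun_mul ((hP i).fun_pow q)
  refine (HasDerivAt.fun_sum fun i _ ↦ hterm i).congr_deriv ?_
  simp only [weightedPowerSum, Finset.mul_sum, ← Finset.sum_add_distrib]
  refine Finset.sum_congr rfl fun i _ ↦ ?_
  rcases q with _ | q
  · simp [mul_assoc]
  · push_cast
    ring

theorem HasDerivAt.eq_zero_of_eqOn_const {f : ℝ → ℝ} {f' a : ℝ} {I : Set ℝ} (hI : IsOpen I)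
    (hx : x ∈ I) (hf : HasDerivAt f f' x) (h : ∀ y ∈ I, f y = a) : f' = 0 :=
  hf.unique <| (hasDerivAt_const x a).congr_of_eventuallyEq <|
    Filter.eventuallyEq_of_mem (hI.mem_nhds hx) h

theorem weightedPowerSum_eq_momentSeq {I : Set ℝ} (hI : IsOpen I) {K : ℝ}
    (hμ : ∀ i, ∀ x ∈ I, HasDerivAt (μ i) (μ i x * P i x) x)
    (hP : ∀ i, ∀ x ∈ I, HasDerivAt (P i) (P i x ^ 2 + c) x)
    (hK : ∀ x ∈ I, weightedPowerSum w μ P 0 x = K) (q : ℕ) :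
    ∀ x ∈ I, weightedPowerSum w μ P q x = momentSeq c K q := by
  have hderiv (q : ℕ) {x : ℝ} (hx : x ∈ I) :=
    hasDerivAt_weightedPowerSum (w := w) (fun i ↦ hμ i x hx) (fun i ↦ hP i x hx) q
  suffices ∀ q, (∀ x ∈ I, weightedPowerSum w μ P q x = momentSeq c K q) ∧
      ∀ x ∈ I, weightedPowerSum w μ P (q + 1) x = momentSeq c K (q + 1) from (this q).1
  intro q
  induction q with
  | zero =>
    refine ⟨hK, fun x hx ↦ ?_⟩
    simpa [momentSeq] using (hderiv 0 hx).eq_zero_of_eqOn_const hI hx hK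
  | succ k ih =>
    refine ⟨ih.2, fun x hx ↦ ?_⟩
    have h := (hderiv (k + 1) hx).eq_zero_of_eqOn_const hI hx ih.2
    rw [Nat.add_sub_cancel, ih.1 x hx] at h
    rw [momentSeq]
    field_simp
    push_cast at h
    linarith

end WeightedPowerSum

theorem stmt_3_general (d : ℕ) (n : Fin d → ℕ)
    (c K : ℝ)
    (I : Set ℝ) (hIopen : IsOpen I)
    (μ P : Fin d → ℝ → ℝ)
    (hμ : ∀ α, ∀ x ∈ I, HasDerivAt (μ α) (μ α x * P α x) x)
    (hP : ∀ α, ∀ x ∈ I, HasDerivAt (P α) (P α x ^ 2 + c) x)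
    (hconst : ∀ x ∈ I, ∑ α, (n α : ℝ) * μ α x = K) :
    ∀ q : ℕ, 1 ≤ q → ∀ x ∈ I,
      (Odd q → ∑ α, (n α : ℝ) * μ α x * P α x ^ q = 0) ∧
      (Even q → ∑ α, (n α : ℝ) * μ α x * P α x ^ q =
        ((Nat.doubleFactorial (q - 1) : ℝ) / (Nat.doubleFactorial q : ℝ)) *
          (-c) ^ (q / 2) * K) := by
  intro q _ x hx
  have hS : weightedPowerSum (fun α ↦ (n α : ℝ)) μ P q x = momentSeq c K q :=
    weightedPowerSum_eq_momentSeq hIopen hμ hP (by simpa [weightedPowerSum] using hconst) q x hx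
  refine ⟨fun ⟨m, hm⟩ ↦ ?_, fun ⟨m, hm⟩ ↦ ?_⟩
  · subst hm
    exact hS.trans (momentSeq_odd c K m)
  · rw [← two_mul] at hm
    subst hm
    rw [Nat.mul_div_cancel_left m two_pos, ← momentSeq_even]
    exact hS

/-- Lemma 3.3 of the paper: if `μ α ' = μ α * P α`, `P α ' = P α ^ 2 + c` on a nonempty
open interval `I` and `∑ α, n α * μ α = K` on `I`, then for every `q ≥ 1` and `x ∈ I`,
`∑ α, n α * μ α * P α ^ q` vanishes when `q` is odd and equals
`((q-1)‼ / q‼) * (-c) ^ (q/2) * K` when `q` is even. -/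
theorem stmt_3 (d : ℕ) (hd : 0 < d) (n : Fin d → ℕ) (hn : ∀ α, 0 < n α)
    (c K : ℝ)
    (I : Set ℝ) (hIopen : IsOpen I) (hIne : I.Nonempty) (hIconn : I.OrdConnected)
    (μ P : Fin d → ℝ → ℝ)
    (hμ : ∀ α, ∀ x ∈ I, HasDerivAt (μ α) (μ α x * P α x) x)
    (hP : ∀ α, ∀ x ∈ I, HasDerivAt (P α) (P α x ^ 2 + c) x)
    (hconst : ∀ x ∈ I, ∑ α, (n α : ℝ) * μ α x = K) :
    ∀ q : ℕ, 1 ≤ q → ∀ x ∈ I,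
      (Odd q → ∑ α, (n α : ℝ) * μ α x * P α x ^ q = 0) ∧
      (Even q → ∑ α, (n α : ℝ) * μ α x * P α x ^ q =
        ((Nat.doubleFactorial (q - 1) : ℝ) / (Nat.doubleFactorial q : ℝ)) *
          (-c) ^ (q / 2) * K) :=
  stmt_3_general d n c K I hIopen μ P hμ hP hconst
end

section
/- For every integer n ≥ 3, the cubic polynomial f_{n,3}(t) = n⁴t³ − 2n²(n²−5n+5)t² − (n−1)(2n−5)(3n−5)t − (n−1)(n−2)² has exactly one real root t₀ in the open interval (0, 2). -/
/-! For a cubic `f(t) = a t³ - b t² - c t - d` with `a > 0` and `c, d ≥ 0`, whatever the sign of `b`,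
`f(t) / t² = a t - b - c / t - d / t²` is strictly increasing on `t > 0`, so `f` has at most one
positive root (Descartes' rule of signs). For `f_{n,3}` one has `f(0) < 0` and
`f(2) = 27 (n - 1)(n² + 2n - 2) > 0`, so the intermediate value theorem supplies the root. -/

open Set

section Cubic

variable {a b c d : ℝ}

theorem strictMonoOn_cubic_div_sq (ha : 0 < a) (hc : 0 ≤ c) (hd : 0 ≤ d) :
    StrictMonoOn (fun t => (a * t ^ 3 - b * t ^ 2 - c * t - d) / t ^ 2) (Ioi 0) := by
  intro x (hx : 0 < x) y (hy : 0 < y) hxy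
  have hdiv (t : ℝ) (ht : 0 < t) :
      (a * t ^ 3 - b * t ^ 2 - c * t - d) / t ^ 2 = a * t - b - c / t - d / t ^ 2 := by
    field_simp
  simp only [hdiv x hx, hdiv y hy]
  have hc' : c / y ≤ c / x := div_le_div_of_nonneg_left hc hx hxy.le
  have hd' : d / y ^ 2 ≤ d / x ^ 2 := by gcongr
  have ha' : a * x < a * y := by gcongr
  linarith

theorem eq_of_cubic_eq_zero_of_pos (ha : 0 < a) (hc : 0 ≤ c) (hd : 0 ≤ d) {x y : ℝ}
    (hx : 0 < x) (hy : 0 < y) (hfx : a * x ^ 3 - b * x ^ 2 - c * x - d = 0)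
    (hfy : a * y ^ 3 - b * y ^ 2 - c * y - d = 0) : x = y :=
  (strictMonoOn_cubic_div_sq (b := b) ha hc hd).injOn hx hy (by simp only [hfx, hfy, zero_div])

theorem existsUnique_cubic_eq_zero_Ioo (ha : 0 < a) (hc : 0 ≤ c) (hd : 0 < d) {r : ℝ}
    (hr₀ : 0 ≤ r) (hr : 0 < a * r ^ 3 - b * r ^ 2 - c * r - d) :
    ∃! t : ℝ, t ∈ Ioo 0 r ∧ a * t ^ 3 - b * t ^ 2 - c * t - d = 0 := by
  have hcont : ContinuousOn (fun t : ℝ => a * t ^ 3 - b * t ^ 2 - c * t - d) (Icc 0 r) := by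
    fun_prop
  obtain ⟨t₀, ht₀, hroot⟩ := intermediate_value_Ioo hr₀ hcont ⟨by simpa using hd, hr⟩
  exact ⟨t₀, ⟨ht₀, hroot⟩, fun t ⟨ht, hft⟩ =>
    eq_of_cubic_eq_zero_of_pos ha hc hd.le ht.1 ht₀.1 hft hroot⟩

end Cubic

/-- Corollary 1.4 of the paper: for every integer `n ≥ 3`, the cubic polynomial
`f_{n,3}(t) = n⁴t³ − 2n²(n²−5n+5)t² − (n−1)(2n−5)(3n−5)t − (n−1)(n−2)²`
has exactly one real root in the open interval `(0, 2)`. -/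
theorem stmt_12 (n : ℕ) (hn : 3 ≤ n) :
    ∃! t₀ : ℝ, t₀ ∈ Set.Ioo (0 : ℝ) 2 ∧
      (n : ℝ) ^ 4 * t₀ ^ 3 - 2 * (n : ℝ) ^ 2 * ((n : ℝ) ^ 2 - 5 * n + 5) * t₀ ^ 2 -
        ((n : ℝ) - 1) * (2 * (n : ℝ) - 5) * (3 * (n : ℝ) - 5) * t₀ -
        ((n : ℝ) - 1) * ((n : ℝ) - 2) ^ 2 = 0 := by
  have hN : (3 : ℝ) ≤ n := by exact_mod_cast hn
  refine existsUnique_cubic_eq_zero_Ioo (by positivity) ?_ ?_ zero_le_two ?_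
  · exact mul_nonneg (mul_nonneg (by linarith) (by linarith)) (by linarith)
  · exact mul_pos (by linarith) (pow_pos (by linarith) 2)
  · have hf2 : (n : ℝ) ^ 4 * 2 ^ 3 - 2 * (n : ℝ) ^ 2 * ((n : ℝ) ^ 2 - 5 * n + 5) * 2 ^ 2 -
        ((n : ℝ) - 1) * (2 * (n : ℝ) - 5) * (3 * (n : ℝ) - 5) * 2 -
        ((n : ℝ) - 1) * ((n : ℝ) - 2) ^ 2 = 27 * (((n : ℝ) - 1) * ((n : ℝ) ^ 2 + 2 * n - 2)) := by ring
    rw [hf2]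
    exact mul_pos (by norm_num) (mul_pos (by linarith) (by nlinarith))
end
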